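/- Consider a convex polyhedron in R^3 evolving under constant normal speeds of its supporting planes. The polyhedron degenerates in finite time if and only if one of the following holds: (1) two faces with antiparallel normals have supporting-plane distance vanishing in finite time; (2) three faces whose normals are all orthogonal to some common line form a triangular-prism surface whose cross-sectional triangle degenerates in finite time; (3) four faces whose supporting planes form a tetrahedron degenerating to zero volume in finite time. -/

import Mathlib

/-!
A polyhedron has empty interior exactly when finitely many open half-spaces `⟪x, n i⟫ < a i`
have empty intersection; pass to an inclusion-minimal empty subfamily `S`. Helly's theorem in
the span `W` of its normals (constraints only see the projection onto `W`) gives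
`#S ≤ dim W + 1`, and since independent normals always admit a common solution,
`#S = dim W + 1`. Minimality also forces every direction that weakly decreases all constraints
of `S` to leave them unchanged. In `ℝ³` this leaves an antiparallel pair (`#S = 2`), three
normals orthogonal to a common line (`#S = 3`), or four normals positively spanning the space,
i.e. a tetrahedron (`#S = 4`). For a pair, the width of the slab is affine in `t` and positive
at `t = 0`, so by the intermediate value theorem it vanishes at some time.
-/

open RealInnerProductSpace Module Submodule Filter

section
variable {E : Type*} [NormedAddCommGroup E] [InnerProductSpace ℝ E]

theorem interior_setOf_inner_le {m : E} (hm : m ≠ 0) (a : ℝ) :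
    interior {x : E | ⟪x, m⟫ ≤ a} = {x | ⟪x, m⟫ < a} := by
  have hf : innerSL ℝ m ≠ 0 := fun h => hm (by simpa using congr($h m))
  have h := ((innerSL ℝ m).isOpenMap_of_ne_zero hf).preimage_interior_eq_interior_preimage
      (innerSL ℝ m).continuous (Set.Iic a)
  simp only [interior_Iic] at h
  convert h.symm using 2 <;> ext x <;> simp [real_inner_comm]

theorem convex_setOf_inner_lt (m : E) (a : ℝ) : Convex ℝ {x : E | ⟪x, m⟫ < a} :=
  convex_halfSpace_lt ⟨fun x y => inner_add_left x y m, fun r x => real_inner_smul_left x m r⟩ a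

theorem LinearIndependent.exists_forall_inner_eq {ι : Type*} [Finite ι] {v : ι → E}
    (hv : LinearIndependent ℝ v) (c : ι → ℝ) : ∃ x : E, ∀ i, ⟪x, v i⟫ = c i := by
  have := FiniteDimensional.span_of_finite ℝ (Set.finite_range v)
  let b := Module.Basis.span hv
  let y := (InnerProductSpace.toDual ℝ _).symm (b.constr ℝ c).toContinuousLinearMap
  refine ⟨y, fun i => ?_⟩
  have hbi : (b i : E) = v i := by simp [b]
  rw [← hbi, ← Submodule.coe_inner, InnerProductSpace.toDual_symm_apply]
  simp

variable {ι : Type*}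

def openPolyhedron (n : ι → E) (a : ι → ℝ) (S : Finset ι) : Set E :=
  ⋂ i ∈ S, {x | ⟪x, n i⟫ < a i}

theorem openPolyhedron_eq_empty_of_subset {n : ι → E} {a : ι → ℝ} {S T : Finset ι} (hST : S ⊆ T)
    (hS : openPolyhedron n a S = ∅) : openPolyhedron n a T = ∅ :=
  Set.subset_empty_iff.mp (hS ▸ Set.biInter_subset_biInter_left hST)

theorem openPolyhedron_insert [DecidableEq ι] (n : ι → E) (a : ι → ℝ) (i : ι) (S : Finset ι) :
    openPolyhedron n a (insert i S) = {x | ⟪x, n i⟫ < a i} ∩ openPolyhedron n a S :=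
  Finset.set_biInter_insert i S _

theorem openPolyhedron_singleton (n : ι → E) (a : ι → ℝ) (i : ι) :
    openPolyhedron n a {i} = {x | ⟪x, n i⟫ < a i} :=
  Finset.set_biInter_singleton i _

theorem interior_biInter_setOf_inner_le {n : ι → E} (hn : ∀ i, n i ≠ 0) (b : ι → ℝ)
    (S : Finset ι) : interior (⋂ i ∈ S, {x : E | ⟪x, n i⟫ ≤ b i}) = openPolyhedron n b S := by
  simp only [Finset.interior_iInter, interior_setOf_inner_le (hn _), openPolyhedron]

theorem openPolyhedron_nonempty_of_linearIndependent {n : ι → E} (a : ι → ℝ) {S : Finset ι}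
    (hS : LinearIndependent ℝ fun i : S => n i) : (openPolyhedron n a S).Nonempty := by
  obtain ⟨x, hx⟩ := hS.exists_forall_inner_eq fun i => a i - 1
  exact ⟨x, Set.mem_iInter₂.mpr fun i hi => by simp [hx ⟨i, hi⟩]⟩

theorem openPolyhedron_pair_eq_empty_iff [DecidableEq ι] {n : ι → E} (a : ι → ℝ) {i j : ι}
    (hi : ‖n i‖ = 1) (hji : n j = -n i) : openPolyhedron n a {i, j} = ∅ ↔ a i + a j ≤ 0 := by
  have hii : ⟪n i, n i⟫ = 1 := by rw [real_inner_self_eq_norm_sq, hi, one_pow]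
  simp only [openPolyhedron_insert, openPolyhedron_singleton, hji, inner_neg_right,
    Set.eq_empty_iff_forall_notMem, Set.mem_inter_iff, Set.mem_ofPred_eq, not_and, not_lt]
  constructor
  · intro h
    by_contra! hpos
    have := h (((a i - a j) / 2) • n i)
    simp only [real_inner_smul_left, hii] at this
    linarith [this (by linarith)]
  · intro h x hx
    linarith

section Minimal

variable {n : ι → E} {a : ι → ℝ} {S : Finset ι}

theorem forall_inner_eq_zero_of_minimal
    (hS : Minimal (fun T : Finset ι => openPolyhedron n a T = ∅) S) {v : E}
    (hv : ∀ i ∈ S, ⟪v, n i⟫ ≤ 0) : ∀ i ∈ S, ⟪v, n i⟫ = 0 := by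
  classical
  by_contra! ⟨i₀, hi₀, hne⟩
  have hTS : S.filter (fun i => ⟪v, n i⟫ = 0) ⊂ S := Finset.filter_ssubset.mpr ⟨i₀, hi₀, hne⟩
  obtain ⟨x, hx⟩ := Set.nonempty_iff_ne_empty.mpr (hS.not_prop_of_lt hTS)
  simp only [openPolyhedron, Set.mem_iInter₂, Finset.mem_filter, Set.mem_ofPred_eq] at hx
  have hfar : ∀ᶠ t : ℝ in atTop, ∀ i ∈ S, ⟪x + t • v, n i⟫ < a i := by
    refine (eventually_all_finset S).mpr fun i hi => ?_
    simp only [inner_add_left, real_inner_smul_left]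
    rcases (hv i hi).eq_or_lt with h0 | hneg
    · exact .of_forall fun t => by simpa [h0] using hx i ⟨hi, h0⟩
    · exact (tendsto_atBot_add_const_left _ _
        (tendsto_id.atTop_mul_const_of_neg hneg)).eventually_lt_atBot _
  obtain ⟨t, ht⟩ := hfar.exists
  have hmem : x + t • v ∈ openPolyhedron n a S := Set.mem_iInter₂.mpr ht
  simp [hS.prop] at hmem

theorem card_le_finrank_span_add_one_of_minimal [FiniteDimensional ℝ E]
    (hS : Minimal (fun T : Finset ι => openPolyhedron n a T = ∅) S) :
    S.card ≤ finrank ℝ (span ℝ (Set.range fun i : S => n i)) + 1 := by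
  set W := span ℝ (Set.range fun i : S => n i)
  have hnW : ∀ i ∈ S, n i ∈ W := fun i hi => subset_span ⟨⟨i, hi⟩, rfl⟩
  let F : ι → Set W := fun i => W.subtype ⁻¹' {x | ⟪x, n i⟫ < a i}
  -- the normals lie in `W`, so projecting onto `W` does not change the constraints
  have hproj : ∀ I ⊆ S, ∀ x ∈ openPolyhedron n a I,
      W.orthogonalProjectionOnto x ∈ ⋂ i ∈ I, F i := by
    intro I hIS x hx
    simp only [openPolyhedron, Set.mem_iInter₂, Set.mem_ofPred_eq] at hx
    simp only [F, Set.mem_iInter₂, Set.mem_preimage, Submodule.subtype_apply, Set.mem_ofPred_eq]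
    intro i hi
    have := inner_orthogonalProjectionOnto_eq_of_mem_right (⟨n i, hnW i (hIS hi)⟩ : W) x
    rw [Submodule.coe_inner] at this
    exact this ▸ hx i hi
  obtain ⟨I, hIS, hIcard, hI⟩ :
      ∃ I ⊆ S, I.card ≤ finrank ℝ W + 1 ∧ openPolyhedron n a I = ∅ := by
    by_contra! h
    obtain ⟨y, hy⟩ := Convex.helly_theorem' (F := F)
      (fun i _ => (convex_setOf_inner_lt (n i) (a i)).linear_preimage W.subtype)
      fun I hIS hIc => ⟨_, hproj I hIS _ (h I hIS hIc).some_mem⟩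
    have hmem : (y : E) ∈ openPolyhedron n a S := by simpa [openPolyhedron, F] using hy
    simp [hS.prop] at hmem
  exact hS.eq_of_le hI hIS ▸ hIcard

theorem finrank_span_lt_card_of_minimal
    (hS : Minimal (fun T : Finset ι => openPolyhedron n a T = ∅) S) :
    finrank ℝ (span ℝ (Set.range fun i : S => n i)) < S.card := by
  refine (finrank_range_le_card _).trans_eq (Fintype.card_coe S) |>.lt_of_ne fun h => ?_
  have hli : LinearIndependent ℝ fun i : S => n i :=
    linearIndependent_iff_card_eq_finrank_span.mpr (by rw [Fintype.card_coe, h])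
  exact (openPolyhedron_nonempty_of_linearIndependent a hli).ne_empty hS.prop

theorem card_eq_finrank_span_add_one_of_minimal [FiniteDimensional ℝ E]
    (hS : Minimal (fun T : Finset ι => openPolyhedron n a T = ∅) S) :
    S.card = finrank ℝ (span ℝ (Set.range fun i : S => n i)) + 1 :=
  le_antisymm (card_le_finrank_span_add_one_of_minimal hS) (finrank_span_lt_card_of_minimal hS)

theorem two_le_card_of_minimal (hS : Minimal (fun T : Finset ι => openPolyhedron n a T = ∅) S)
    (hn : ∀ i ∈ S, n i ≠ 0) : 2 ≤ S.card := by
  obtain ⟨i, hi⟩ : S.Nonempty :=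
    Finset.nonempty_iff_ne_empty.mpr fun h => by simpa [h, openPolyhedron] using hS.prop
  have := FiniteDimensional.span_of_finite ℝ (Set.finite_range fun i : S => n i)
  have hpos : finrank ℝ (span ℝ (Set.range fun i : S => n i)) ≠ 0 := fun h =>
    hn i hi (span_eq_bot.mp (Submodule.finrank_eq_zero.mp h) _ ⟨⟨i, hi⟩, rfl⟩)
  have := finrank_span_lt_card_of_minimal hS
  omega

theorem exists_ne_zero_forall_inner_eq_zero_of_minimal [FiniteDimensional ℝ E]
    (hS : Minimal (fun T : Finset ι => openPolyhedron n a T = ∅) S) (hcard : S.card ≤ finrank ℝ E) :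
    ∃ u : E, u ≠ 0 ∧ ∀ i ∈ S, ⟪u, n i⟫ = 0 := by
  have hW : span ℝ (Set.range fun i : S => n i) ≠ ⊤ := fun h => by
    have := finrank_span_lt_card_of_minimal hS
    rw [h, finrank_top] at this
    omega
  obtain ⟨u, hu, hu0⟩ := exists_mem_ne_zero_of_ne_bot (mt orthogonal_eq_bot_iff.mp hW)
  exact ⟨u, hu0, fun i hi =>
    inner_left_of_mem_orthogonal (subset_span (Set.mem_range_self (⟨i, hi⟩ : S))) hu⟩

theorem eq_zero_of_forall_inner_nonpos_of_minimal [FiniteDimensional ℝ E]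
    (hS : Minimal (fun T : Finset ι => openPolyhedron n a T = ∅) S)
    (hcard : S.card = finrank ℝ E + 1) {v : E} (hv : ∀ i ∈ S, ⟪v, n i⟫ ≤ 0) : v = 0 := by
  have hW : span ℝ (Set.range fun i : S => n i) = ⊤ :=
    eq_top_of_finrank_eq (by have := card_eq_finrank_span_add_one_of_minimal hS; omega)
  have hperp : span ℝ (Set.range fun i : S => n i) ≤ (ℝ ∙ v)ᗮ := by
    rw [span_le]
    rintro _ ⟨⟨i, hi⟩, rfl⟩
    exact mem_orthogonal_singleton_iff_inner_right.mpr
      (real_inner_comm v (n i) ▸ forall_inner_eq_zero_of_minimal hS hv i hi)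
  have hvv := mem_orthogonal_singleton_iff_inner_right.mp (hperp (hW ▸ mem_top : v ∈ _))
  exact inner_self_eq_zero.mp hvv

theorem neg_eq_of_minimal_pair [DecidableEq ι] {i j : ι}
    (hS : Minimal (fun T : Finset ι => openPolyhedron n a T = ∅) {i, j})
    (hi : ‖n i‖ = 1) (hj : ‖n j‖ = 1) : n j = -n i := by
  have hii : ⟪n i, n i⟫ = 1 := by rw [real_inner_self_eq_norm_sq, hi, one_pow]
  have hjj : ⟪n j, n j⟫ = 1 := by rw [real_inner_self_eq_norm_sq, hj, one_pow]
  have hCS : -1 ≤ ⟪n i, n j⟫ := by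
    simpa [hi, hj] using neg_le_of_abs_le (abs_real_inner_le_norm (n i) (n j))
  have h₁ : ⟪-(n i + n j), n i⟫ = -(1 + ⟪n i, n j⟫) := by
    rw [inner_neg_left, inner_add_left, hii, real_inner_comm]
  have h₂ : ⟪-(n i + n j), n j⟫ = -(1 + ⟪n i, n j⟫) := by
    rw [inner_neg_left, inner_add_left, hjj, add_comm]
  -- `-(n i + n j)` weakly decreases both constraints, so by minimality it fixes them
  have hzero : 1 + ⟪n i, n j⟫ = 0 := by
    have := forall_inner_eq_zero_of_minimal hS (v := -(n i + n j)) (fun k hk => by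
      rcases Finset.mem_insert.mp hk with rfl | hk
      · linarith
      · rw [Finset.mem_singleton.mp hk]; linarith) i (by simp)
    linarith
  have hnorm : ‖n i + n j‖ ^ 2 = 0 := by
    rw [norm_add_sq_real, hi, hj]; linarith
  rw [eq_neg_iff_add_eq_zero, add_comm]
  simpa using hnorm

end Minimal

theorem exists_degenerate_subfamily [DecidableEq ι] [FiniteDimensional ℝ E]
    (hE : finrank ℝ E = 3) {n : ι → E} (hn : ∀ i, ‖n i‖ = 1) {a : ι → ℝ} {S₀ : Finset ι}
    (h : openPolyhedron n a S₀ = ∅) :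
    (∃ i j, n j = -n i ∧ a i + a j ≤ 0) ∨
    (∃ i j k, (∃ u : E, u ≠ 0 ∧ ⟪u, n i⟫ = 0 ∧ ⟪u, n j⟫ = 0 ∧ ⟪u, n k⟫ = 0) ∧
      openPolyhedron n a {i, j, k} = ∅) ∨
    (∃ i j k l, {v : E | ⟪v, n i⟫ ≤ 0 ∧ ⟪v, n j⟫ ≤ 0 ∧ ⟪v, n k⟫ ≤ 0 ∧ ⟪v, n l⟫ ≤ 0} = {0} ∧
      openPolyhedron n a {i, j, k, l} = ∅) := by
  obtain ⟨S, -, hS⟩ := exists_minimal_le_of_wellFoundedLT (fun T => openPolyhedron n a T = ∅) S₀ h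
  have hlow := two_le_card_of_minimal hS fun i _ => norm_ne_zero_iff.mp (by simp [hn i])
  have hup : S.card ≤ 4 := by
    have := card_le_finrank_span_add_one_of_minimal hS
    have := hE ▸ Submodule.finrank_le (span ℝ (Set.range fun i : S => n i))
    omega
  interval_cases hc : S.card
  · obtain ⟨i, j, -, rfl⟩ := Finset.card_eq_two.mp hc
    have hji := neg_eq_of_minimal_pair hS (hn i) (hn j)
    exact Or.inl ⟨i, j, hji, (openPolyhedron_pair_eq_empty_iff a (hn i) hji).mp hS.prop⟩
  · obtain ⟨i, j, k, -, -, -, rfl⟩ := Finset.card_eq_three.mp hc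
    obtain ⟨u, hu, hperp⟩ := exists_ne_zero_forall_inner_eq_zero_of_minimal hS (by omega)
    exact Or.inr <| Or.inl ⟨i, j, k,
      ⟨u, hu, hperp i (by simp), hperp j (by simp), hperp k (by simp)⟩, hS.prop⟩
  · obtain ⟨i, T, -, rfl, hT⟩ := Finset.card_eq_succ.mp hc
    obtain ⟨j, k, l, -, -, -, rfl⟩ := Finset.card_eq_three.mp hT
    refine Or.inr <| Or.inr ⟨i, j, k, l, Set.eq_singleton_iff_unique_mem.mpr ⟨by simp, ?_⟩, hS.prop⟩
    rintro v ⟨hi, hj, hk, hl⟩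
    refine eq_zero_of_forall_inner_nonpos_of_minimal hS (by omega) fun m hm => ?_
    simp only [Finset.mem_insert, Finset.mem_singleton] at hm
    rcases hm with rfl | rfl | rfl | rfl <;> assumption

end

/-- Degeneration criterion for an evolving convex polyhedron in `ℝ³`: it degenerates
in finite time iff (1) two faces with antiparallel normals collapse, or (2) three
faces whose normals are orthogonal to a common line form a collapsing triangular-prism
surface, or (3) four faces form a tetrahedron collapsing in finite time. -/
theorem polyhedron_degeneration_criterion
    {ι : Type*} [Fintype ι]
    (n : ι → EuclideanSpace ℝ (Fin 3)) (c s : ι → ℝ)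
    (hunit : ∀ i, ‖n i‖ = 1)
    (hpoly : (interior (⋂ i, {x : EuclideanSpace ℝ (Fin 3) |
        ⟪x, n i⟫ ≤ c i + s i * 0})).Nonempty) :
    (∃ t : ℝ, 0 ≤ t ∧
        interior (⋂ i, {x : EuclideanSpace ℝ (Fin 3) | ⟪x, n i⟫ ≤ c i + s i * t}) = ∅) ↔
      ((∃ f₁ f₂ : ι, n f₂ = -n f₁ ∧
          ∃ t : ℝ, 0 ≤ t ∧ (c f₁ + s f₁ * t) + (c f₂ + s f₂ * t) = 0) ∨
       (∃ f₁ f₂ f₃ : ι, (∃ u : EuclideanSpace ℝ (Fin 3), u ≠ 0 ∧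
            ⟪u, n f₁⟫ = 0 ∧ ⟪u, n f₂⟫ = 0 ∧ ⟪u, n f₃⟫ = 0) ∧
          ∃ t : ℝ, 0 ≤ t ∧
            interior {x : EuclideanSpace ℝ (Fin 3) |
                ⟪x, n f₁⟫ ≤ c f₁ + s f₁ * t ∧ ⟪x, n f₂⟫ ≤ c f₂ + s f₂ * t ∧
                ⟪x, n f₃⟫ ≤ c f₃ + s f₃ * t} = ∅) ∨
       (∃ f₁ f₂ f₃ f₄ : ι,
          -- the four supporting planes bound a tetrahedron
          {v : EuclideanSpace ℝ (Fin 3) | ⟪v, n f₁⟫ ≤ 0 ∧ ⟪v, n f₂⟫ ≤ 0 ∧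
              ⟪v, n f₃⟫ ≤ 0 ∧ ⟪v, n f₄⟫ ≤ 0} = {0} ∧
          ∃ t : ℝ, 0 ≤ t ∧
            interior {x : EuclideanSpace ℝ (Fin 3) |
                ⟪x, n f₁⟫ ≤ c f₁ + s f₁ * t ∧ ⟪x, n f₂⟫ ≤ c f₂ + s f₂ * t ∧
                ⟪x, n f₃⟫ ≤ c f₃ + s f₃ * t ∧ ⟪x, n f₄⟫ ≤ c f₄ + s f₄ * t} = ∅)) := by
  classical
  have hn : ∀ i, n i ≠ 0 := fun i => norm_ne_zero_iff.mp (by simp [hunit i])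
  have hint : ∀ t : ℝ, interior (⋂ i, {x : EuclideanSpace ℝ (Fin 3) | ⟪x, n i⟫ ≤ c i + s i * t}) =
      openPolyhedron n (fun i => c i + s i * t) Finset.univ := fun t => by
    simpa using interior_biInter_setOf_inner_le hn (fun i => c i + s i * t) Finset.univ
  have hfaces : ∀ (t : ℝ) (S : Finset ι), openPolyhedron n (fun i => c i + s i * t) S = ∅ →
      openPolyhedron n (fun i => c i + s i * t) Finset.univ = ∅ :=
    fun t S => openPolyhedron_eq_empty_of_subset (Finset.subset_univ S)
  simp only [hint, Set.ofPred_and, interior_inter, interior_setOf_inner_le (hn _)] at hpoly ⊢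
  constructor
  · rintro ⟨t, ht, hdeg⟩
    rcases exists_degenerate_subfamily finrank_euclideanSpace_fin hunit hdeg with
      ⟨i, j, hji, hsum⟩ | ⟨i, j, k, hu, hijk⟩ | ⟨i, j, k, l, hcone, hijkl⟩
    · have h0 : 0 < (c i + s i * 0) + (c j + s j * 0) := not_le.mp fun h => hpoly.ne_empty <|
        hfaces 0 _ ((openPolyhedron_pair_eq_empty_iff _ (hunit i) hji).mpr h)
      obtain ⟨τ, hτ, hτ0⟩ := intermediate_value_Icc' ht
        (by fun_prop : ContinuousOn (fun τ => (c i + s i * τ) + (c j + s j * τ)) _) ⟨hsum, h0.le⟩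
      exact Or.inl ⟨i, j, hji, τ, hτ.1, hτ0⟩
    · refine Or.inr <| Or.inl ⟨i, j, k, hu, t, ht, ?_⟩
      simpa only [openPolyhedron_insert, openPolyhedron_singleton] using hijk
    · refine Or.inr <| Or.inr ⟨i, j, k, l, hcone, t, ht, ?_⟩
      simpa only [openPolyhedron_insert, openPolyhedron_singleton] using hijkl
  · rintro (⟨i, j, hji, t, ht, hsum⟩ | ⟨i, j, k, -, t, ht, hijk⟩ | ⟨i, j, k, l, -, t, ht, hijkl⟩)
    · exact ⟨t, ht, hfaces t _ ((openPolyhedron_pair_eq_empty_iff _ (hunit i) hji).mpr hsum.le)⟩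
    · refine ⟨t, ht, hfaces t {i, j, k} ?_⟩
      simpa only [openPolyhedron_insert, openPolyhedron_singleton] using hijk
    · refine ⟨t, ht, hfaces t {i, j, k, l} ?_⟩
      simpa only [openPolyhedron_insert, openPolyhedron_singleton] using hijkl
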